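/- arXiv:2305.14776 — 3 statements merged into one kernel-verified Lean document; each statement's English description precedes it below -/
import Mathlib

section
/- Let $c$ be a positive integer. Then there is a constant $C$ depending only on $c$ such that for all $z \ge 2$, $\sum_{1 < h_s < h_r < z} \frac{1}{h_s h_r} \prod_{p \mid (h_r - h_s)} \left(1 + \frac{1}{p}\right)^{c} \le C (\log z)^2$, where $h_s, h_r$ run over integers with $1 < h_s < h_r < z$ and the product is over primes $p$ dividing $h_r - h_s$. -/
open Finset

-- harmonic sum bound
lemma harm_le (N : ℕ) : ∑ k ∈ Finset.Icc 1 N, (k:ℝ)⁻¹ ≤ 1 + Real.log N := by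
  have h := harmonic_le_one_add_log N
  rw [harmonic_eq_sum_Icc] at h
  calc ∑ k ∈ Finset.Icc 1 N, (k:ℝ)⁻¹
      = ((∑ i ∈ Finset.Icc 1 N, (i:ℚ)⁻¹ : ℚ) : ℝ) := by push_cast; rfl
    _ ≤ 1 + Real.log N := h

-- pointwise binomial-type bound
lemma one_add_pow_le (x : ℝ) (hx0 : 0 ≤ x) (hx1 : x ≤ 1) (c : ℕ) :
    (1 + x) ^ c ≤ 1 + (2 ^ c - 1) * x := by
  induction c with
  | zero => norm_num
  | succ n ih =>
    have h2 : (0:ℝ) ≤ 2 ^ n - 1 := by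
      have : (1:ℝ) ≤ 2 ^ n := one_le_pow₀ (by norm_num)
      linarith
    have hx2 : x * x ≤ x := by nlinarith
    calc (1+x)^(n+1) = (1+x)^n * (1+x) := by ring
      _ ≤ (1 + (2^n - 1)*x) * (1+x) := by
          apply mul_le_mul_of_nonneg_right ih (by linarith)
      _ ≤ 1 + (2^(n+1) - 1) * x := by ring_nf; nlinarith [pow_nonneg (by norm_num : (0:ℝ) ≤ 2) n]

-- sqrt of a product
lemma sqrt_prod' (s : Finset ℕ) : Real.sqrt (∏ p ∈ s, (p:ℝ)) = ∏ p ∈ s, Real.sqrt (p:ℝ) := by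
  induction s using Finset.cons_induction with
  | empty => simp
  | cons a s ha ih =>
    rw [Finset.prod_cons, Finset.prod_cons, Real.sqrt_mul (by positivity), ih]
lemma omega_pow_le (c : ℕ) (hc : 0 < c) (e : ℕ) (he : 1 ≤ e) :
    ((2:ℝ)^c - 1) ^ e.primeFactors.card ≤ ((2:ℝ)^c - 1) ^ (2^(2*c)) * Real.sqrt e := by
  set K : ℝ := (2:ℝ)^c - 1 with hKdef
  set T : ℕ := 2^(2*c) with hTdef
  have hK1 : (1:ℝ) ≤ K := by
    have : (2:ℝ)^1 ≤ 2^c := pow_le_pow_right₀ (by norm_num) hc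
    simp only [pow_one] at this; simp only [hKdef]; linarith
  have hK0 : (0:ℝ) ≤ K := by linarith
  set P := e.primeFactors with hP
  have hsplit : K ^ P.card = (∏ p ∈ P.filter (· ≤ T), K) * (∏ p ∈ P.filter (¬ · ≤ T), K) := by
    rw [Finset.prod_filter_mul_prod_filter_not, Finset.prod_const]
  rw [hsplit]
  have h1 : ∏ p ∈ P.filter (· ≤ T), K ≤ K ^ T := by
    rw [Finset.prod_const]
    apply pow_le_pow_right₀ hK1
    have hsub : P.filter (· ≤ T) ⊆ Finset.Icc 1 T := by
      intro p hp
      simp only [Finset.mem_filter] at hp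
      rw [Finset.mem_Icc]
      exact ⟨(Nat.prime_of_mem_primeFactors hp.1).one_lt.le.trans' (by norm_num), hp.2⟩
    calc (P.filter (· ≤ T)).card ≤ (Finset.Icc 1 T).card := Finset.card_le_card hsub
      _ = T := by simp
  have h2 : ∏ p ∈ P.filter (¬ · ≤ T), K ≤ Real.sqrt e := by
    have step1 : ∏ p ∈ P.filter (¬ · ≤ T), K ≤ ∏ p ∈ P.filter (¬ · ≤ T), Real.sqrt (p:ℝ) := by
      apply Finset.prod_le_prod (fun _ _ => hK0)
      intro p hp
      simp only [Finset.mem_filter, not_le] at hp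
      have hTp : (T:ℝ) ≤ (p:ℝ) := by exact_mod_cast hp.2.le
      calc K ≤ (2:ℝ)^c := by simp [hKdef]
        _ = Real.sqrt (((2:ℝ)^c)^2) := by rw [Real.sqrt_sq (by positivity)]
        _ = Real.sqrt (T:ℝ) := by
            congr 1
            rw [hTdef]; push_cast; rw [← pow_mul, mul_comm 2 c, pow_mul]
        _ ≤ Real.sqrt (p:ℝ) := Real.sqrt_le_sqrt hTp
    have hone : ∀ p ∈ P, (1:ℝ) ≤ Real.sqrt (p:ℝ) := by
      intro p hp
      have h1 : (1:ℝ) ≤ (p:ℝ) := by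
        exact_mod_cast (Nat.prime_of_mem_primeFactors hp).one_lt.le
      rw [show (1:ℝ) = Real.sqrt 1 by simp]
      exact Real.sqrt_le_sqrt h1
    have step2 : ∏ p ∈ P.filter (¬ · ≤ T), Real.sqrt (p:ℝ) ≤ ∏ p ∈ P, Real.sqrt (p:ℝ) := by
      rw [← Finset.prod_filter_mul_prod_filter_not P (fun x => ¬ x ≤ T)]
      refine le_mul_of_one_le_right (Finset.prod_nonneg fun p _ => Real.sqrt_nonneg _) ?_
      calc (1:ℝ) = ∏ _p ∈ P.filter (fun x => ¬ ¬ x ≤ T), 1 := by rw [Finset.prod_const_one]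
        _ ≤ _ := Finset.prod_le_prod (fun _ _ => zero_le_one)
            (fun p hp => hone p (Finset.mem_of_mem_filter p hp))
    have step3 : ∏ p ∈ P, Real.sqrt (p:ℝ) ≤ Real.sqrt e := by
      rw [← sqrt_prod']
      apply Real.sqrt_le_sqrt
      have hdvd : ∏ p ∈ P, p ∣ e := Nat.prod_primeFactors_dvd e
      have h : ((∏ p ∈ P, p : ℕ) : ℝ) ≤ (e : ℝ) := Nat.cast_le.mpr (Nat.le_of_dvd he hdvd)
      rwa [Nat.cast_prod] at h
    exact (step1.trans step2).trans step3
  have hA : (0:ℝ) ≤ ∏ p ∈ P.filter (· ≤ T), K := Finset.prod_nonneg (fun _ _ => hK0)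
  have hB : (0:ℝ) ≤ ∏ p ∈ P.filter (¬ · ≤ T), K := Finset.prod_nonneg (fun _ _ => hK0)
  exact mul_le_mul h1 h2 hB (by positivity)

-- expansion into divisor sum
lemma prod_le_divisor_sum (c : ℕ) (d : ℕ) (hd : 1 ≤ d) :
    ∏ p ∈ d.primeFactors, (1 + 1/(p:ℝ))^c ≤
      ∑ e ∈ d.divisors, ((2:ℝ)^c - 1) ^ e.primeFactors.card / (e:ℝ) := by
  set K : ℝ := (2:ℝ)^c - 1 with hKdef
  have hK0 : (0:ℝ) ≤ K := by
    have : (1:ℝ) ≤ 2 ^ c := one_le_pow₀ (by norm_num)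
    simp only [hKdef]; linarith
  set P := d.primeFactors with hP
  have hprime : ∀ p ∈ P, p.Prime := fun p hp => Nat.prime_of_mem_primeFactors hp
  -- step 1: pointwise
  have step1 : ∏ p ∈ P, (1 + 1/(p:ℝ))^c ≤ ∏ p ∈ P, (K/(p:ℝ) + 1) := by
    apply Finset.prod_le_prod
    · intro p hp; positivity
    · intro p hp
      have hp2 : (2:ℝ) ≤ (p:ℝ) := by exact_mod_cast (hprime p hp).two_le
      have h0 : (0:ℝ) < (p:ℝ) := by linarith
      have := one_add_pow_le (1/(p:ℝ)) (by positivity) (by rw [div_le_one h0]; linarith) c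
      calc (1 + 1/(p:ℝ))^c ≤ 1 + K * (1/(p:ℝ)) := this
        _ = K/(p:ℝ) + 1 := by ring
  -- step 2: expand
  have step2 : ∏ p ∈ P, (K/(p:ℝ) + 1) = ∑ t ∈ P.powerset, ∏ p ∈ t, (K/(p:ℝ)) := by
    rw [Finset.prod_add]
    apply Finset.sum_congr rfl
    intro t _
    rw [Finset.prod_const_one, mul_one]
  -- step 3: each subset term equals G (∏ t)
  have step3 : ∀ t ∈ P.powerset, ∏ p ∈ t, (K/(p:ℝ))
      = K ^ (∏ p ∈ t, p).primeFactors.card / ((∏ p ∈ t, p : ℕ) : ℝ) := by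
    intro t ht
    rw [Finset.mem_powerset] at ht
    have hpt : ∀ p ∈ t, p.Prime := fun p hp => hprime p (ht hp)
    rw [Nat.primeFactors_prod hpt, Finset.prod_div_distrib, Finset.prod_const, Nat.cast_prod]
  -- step 4: reindex to divisors
  have step4 : ∑ t ∈ P.powerset, K ^ (∏ p ∈ t, p).primeFactors.card / ((∏ p ∈ t, p : ℕ) : ℝ)
      ≤ ∑ e ∈ d.divisors, K ^ e.primeFactors.card / (e:ℝ) := by
    have hinj : ∀ t ∈ P.powerset, ∀ u ∈ P.powerset, ∏ p ∈ t, p = ∏ p ∈ u, p → t = u := by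
      intro t ht u hu htu
      rw [Finset.mem_powerset] at ht hu
      have h2 := congrArg Nat.primeFactors htu
      rwa [Nat.primeFactors_prod (fun p hp => hprime p (ht hp)),
        Nat.primeFactors_prod (fun p hp => hprime p (hu hp))] at h2
    have himg := Finset.sum_image
      (f := fun e : ℕ => K ^ e.primeFactors.card / (e:ℝ)) hinj
    refine le_trans (le_of_eq himg.symm) ?_
    apply Finset.sum_le_sum_of_subset_of_nonneg
    · intro e he
      rw [Finset.mem_image] at he
      obtain ⟨t, ht, rfl⟩ := he
      rw [Finset.mem_powerset] at ht
      rw [Nat.mem_divisors]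
      exact ⟨(Finset.prod_dvd_prod_of_subset _ _ _ ht).trans (Nat.prod_primeFactors_dvd d),
        by omega⟩
    · intro e _ _; positivity
  calc ∏ p ∈ P, (1 + 1/(p:ℝ))^c ≤ ∑ t ∈ P.powerset, ∏ p ∈ t, (K/(p:ℝ)) := step1.trans_eq step2
    _ = ∑ t ∈ P.powerset, K ^ (∏ p ∈ t, p).primeFactors.card / ((∏ p ∈ t, p : ℕ) : ℝ) :=
        Finset.sum_congr rfl step3
    _ ≤ _ := step4

lemma harm_nonneg (N : ℕ) : (0:ℝ) ≤ 1 + Real.log N := by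
  rcases Nat.eq_zero_or_pos N with h | h
  · simp [h]
  · have : (0:ℝ) ≤ Real.log N := Real.log_nonneg (by exact_mod_cast h)
    linarith

lemma mult_sum (N e : ℕ) (he : 1 ≤ e) :
    ∑ d ∈ (Finset.Icc 1 N).filter (e ∣ ·), (d:ℝ)⁻¹ ≤ (e:ℝ)⁻¹ * (1 + Real.log N) := by
  have he0 : 0 < e := he
  have hset : (Finset.Icc 1 N).filter (e ∣ ·) = (Finset.Icc 1 (N/e)).image (e * ·) := by
    ext m
    simp only [Finset.mem_filter, Finset.mem_Icc, Finset.mem_image]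
    constructor
    · rintro ⟨⟨h1, h2⟩, k, rfl⟩
      refine ⟨k, ⟨?_, ?_⟩, rfl⟩
      · rcases Nat.eq_zero_or_pos k with h | h
        · rw [h, mul_zero] at h1; omega
        · exact h
      · rw [Nat.le_div_iff_mul_le he0, mul_comm]; exact h2
    · rintro ⟨k, ⟨hk1, hk2⟩, rfl⟩
      rw [Nat.le_div_iff_mul_le he0] at hk2
      rw [mul_comm] at hk2
      exact ⟨⟨Nat.one_le_iff_ne_zero.mpr (by positivity), hk2⟩, ⟨k, rfl⟩⟩
  rw [hset, Finset.sum_image (fun a _ b _ h => Nat.eq_of_mul_eq_mul_left he0 h)]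
  have : ∀ k : ℕ, ((e * k : ℕ) : ℝ)⁻¹ = (e:ℝ)⁻¹ * (k:ℝ)⁻¹ := by
    intro k; push_cast; rw [mul_inv]
  rw [Finset.sum_congr rfl (fun k _ => this k), ← Finset.mul_sum]
  apply mul_le_mul_of_nonneg_left _ (by positivity)
  calc ∑ k ∈ Finset.Icc 1 (N/e), (k:ℝ)⁻¹ ≤ ∑ k ∈ Finset.Icc 1 N, (k:ℝ)⁻¹ := by
        apply Finset.sum_le_sum_of_subset_of_nonneg
        · apply Finset.Icc_subset_Icc_right (Nat.div_le_self _ _)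
        · intro k _ _; positivity
    _ ≤ 1 + Real.log N := harm_le N

lemma sum_fd_le (c N : ℕ) (hc : 0 < c) :
    ∑ d ∈ Finset.Icc 1 N, (d:ℝ)⁻¹ * ∏ p ∈ d.primeFactors, (1 + 1/(p:ℝ))^c
      ≤ (((2:ℝ)^c - 1)^(2^(2*c)) * (∑' n : ℕ, ((n:ℝ)^((3:ℝ)/2))⁻¹)) * (1 + Real.log N) := by
  set K : ℝ := (2:ℝ)^c - 1 with hKdef
  have hK0 : (0:ℝ) ≤ K := by
    have : (1:ℝ) ≤ 2 ^ c := one_le_pow₀ (by norm_num)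
    simp only [hKdef]; linarith
  set T : ℕ := 2^(2*c) with hTdef
  set G : ℕ → ℝ := fun e => K ^ e.primeFactors.card / (e:ℝ) with hGdef
  have hG0 : ∀ e, 0 ≤ G e := by intro e; simp only [hGdef]; positivity
  have hsummable : Summable (fun n : ℕ => ((n:ℝ)^((3:ℝ)/2))⁻¹) :=
    Real.summable_nat_rpow_inv.mpr (by norm_num)
  -- step 1: pointwise divisor expansion
  have h1 : ∑ d ∈ Finset.Icc 1 N, (d:ℝ)⁻¹ * ∏ p ∈ d.primeFactors, (1 + 1/(p:ℝ))^c
      ≤ ∑ d ∈ Finset.Icc 1 N, ∑ e ∈ (Finset.Icc 1 N).filter (· ∣ d), (d:ℝ)⁻¹ * G e := by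
    apply Finset.sum_le_sum
    intro d hd
    rw [Finset.mem_Icc] at hd
    have hdiv : d.divisors = (Finset.Icc 1 N).filter (· ∣ d) := by
      ext x
      simp only [Nat.mem_divisors, Finset.mem_filter, Finset.mem_Icc]
      constructor
      · rintro ⟨hx, _⟩
        exact ⟨⟨Nat.pos_of_dvd_of_pos hx (by omega), (Nat.le_of_dvd (by omega) hx).trans hd.2⟩, hx⟩
      · rintro ⟨_, hx⟩; exact ⟨hx, by omega⟩
    calc (d:ℝ)⁻¹ * ∏ p ∈ d.primeFactors, (1 + 1/(p:ℝ))^c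
        ≤ (d:ℝ)⁻¹ * ∑ e ∈ d.divisors, G e := by
          apply mul_le_mul_of_nonneg_left (prod_le_divisor_sum c d hd.1) (by positivity)
      _ = ∑ e ∈ (Finset.Icc 1 N).filter (· ∣ d), (d:ℝ)⁻¹ * G e := by
          rw [hdiv, Finset.mul_sum]
  -- step 2: swap
  have h2 : ∑ d ∈ Finset.Icc 1 N, ∑ e ∈ (Finset.Icc 1 N).filter (· ∣ d), (d:ℝ)⁻¹ * G e
      = ∑ e ∈ Finset.Icc 1 N, G e * ∑ d ∈ (Finset.Icc 1 N).filter (e ∣ ·), (d:ℝ)⁻¹ := by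
    simp_rw [Finset.sum_filter]
    rw [Finset.sum_comm]
    apply Finset.sum_congr rfl
    intro e _
    rw [Finset.mul_sum]
    apply Finset.sum_congr rfl
    intro d _
    by_cases h : e ∣ d <;> simp [h, mul_comm]
  -- step 3: bound inner sums
  have h3 : ∑ e ∈ Finset.Icc 1 N, G e * ∑ d ∈ (Finset.Icc 1 N).filter (e ∣ ·), (d:ℝ)⁻¹
      ≤ ∑ e ∈ Finset.Icc 1 N, (K^T * ((e:ℝ)^((3:ℝ)/2))⁻¹) * (1 + Real.log N) := by
    apply Finset.sum_le_sum
    intro e heI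
    rw [Finset.mem_Icc] at heI
    have he1 : 1 ≤ e := heI.1
    have hepos : (0:ℝ) < e := by exact_mod_cast he1
    have hGe : G e * (e:ℝ)⁻¹ ≤ K^T * ((e:ℝ)^((3:ℝ)/2))⁻¹ := by
      have hb := omega_pow_le c hc e he1
      have hrw : ((e:ℝ)^((3:ℝ)/2))⁻¹ = Real.sqrt e * ((e:ℝ) * e)⁻¹ := by
        have hsq : Real.sqrt e * Real.sqrt e = (e:ℝ) := Real.mul_self_sqrt hepos.le
        have hse : (0:ℝ) < Real.sqrt e := Real.sqrt_pos.mpr hepos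
        have h32 : (e:ℝ)^((3:ℝ)/2) = (e:ℝ) * Real.sqrt e := by
          rw [show (3:ℝ)/2 = 1 + 1/2 by norm_num, Real.rpow_add hepos, Real.rpow_one,
            ← Real.sqrt_eq_rpow]
        rw [h32]
        field_simp
        nlinarith
      rw [hrw]
      calc G e * (e:ℝ)⁻¹ = K ^ e.primeFactors.card * ((e:ℝ) * e)⁻¹ := by
            simp only [hGdef]; rw [mul_inv]; ring
        _ ≤ (K^T * Real.sqrt e) * ((e:ℝ) * e)⁻¹ := by
            apply mul_le_mul_of_nonneg_right hb (by positivity)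
        _ = K^T * (Real.sqrt e * ((e:ℝ)*e)⁻¹) := by ring
    calc G e * ∑ d ∈ (Finset.Icc 1 N).filter (e ∣ ·), (d:ℝ)⁻¹
        ≤ G e * ((e:ℝ)⁻¹ * (1 + Real.log N)) :=
          mul_le_mul_of_nonneg_left (mult_sum N e he1) (hG0 e)
      _ = (G e * (e:ℝ)⁻¹) * (1 + Real.log N) := by ring
      _ ≤ (K^T * ((e:ℝ)^((3:ℝ)/2))⁻¹) * (1 + Real.log N) :=
          mul_le_mul_of_nonneg_right hGe (harm_nonneg N)
  -- step 4: sum of p-series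
  have h4 : ∑ e ∈ Finset.Icc 1 N, (K^T * ((e:ℝ)^((3:ℝ)/2))⁻¹) * (1 + Real.log N)
      ≤ (K^T * (∑' n : ℕ, ((n:ℝ)^((3:ℝ)/2))⁻¹)) * (1 + Real.log N) := by
    have : ∑ e ∈ Finset.Icc 1 N, ((e:ℝ)^((3:ℝ)/2))⁻¹ ≤ ∑' n : ℕ, ((n:ℝ)^((3:ℝ)/2))⁻¹ :=
      Summable.sum_le_tsum _ (fun n _ => by positivity) hsummable
    calc ∑ e ∈ Finset.Icc 1 N, (K^T * ((e:ℝ)^((3:ℝ)/2))⁻¹) * (1 + Real.log N)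
        = (K^T * ∑ e ∈ Finset.Icc 1 N, ((e:ℝ)^((3:ℝ)/2))⁻¹) * (1 + Real.log N) := by
          rw [Finset.mul_sum, Finset.sum_mul]
      _ ≤ _ := by
          apply mul_le_mul_of_nonneg_right _ (harm_nonneg N)
          exact mul_le_mul_of_nonneg_left this (by positivity)
  exact ((h1.trans_eq h2).trans h3).trans h4

theorem sum_pairs_diff_weight_le (c : ℕ) (hc : 0 < c) :
    ∃ C : ℝ, 0 < C ∧ ∀ z : ℝ, 2 ≤ z →
      (∑' h : {h : ℕ × ℕ // 1 < h.1 ∧ h.1 < h.2 ∧ (h.2 : ℝ) < z},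
          ((h.1.1 : ℝ) * (h.1.2 : ℝ))⁻¹ *
            ∏ p ∈ (h.1.2 - h.1.1).primeFactors, (1 + 1 / (p : ℝ)) ^ c)
        ≤ C * (Real.log z) ^ 2 := by
  set K : ℝ := (2:ℝ)^c - 1 with hKdef
  have hK0 : (0:ℝ) ≤ K := by
    have : (1:ℝ) ≤ 2 ^ c := one_le_pow₀ (by norm_num)
    simp only [hKdef]; linarith
  set T : ℕ := 2^(2*c) with hTdef
  set B : ℝ := ∑' n : ℕ, ((n:ℝ)^((3:ℝ)/2))⁻¹ with hBdef
  have hB0 : 0 ≤ B := tsum_nonneg (fun n => by positivity)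
  set C : ℝ := 9 * (K^T * B) + 1 with hCdef
  refine ⟨C, by positivity, ?_⟩
  intro z hz
  set N : ℕ := ⌊z⌋₊ with hNdef
  have hz0 : (0:ℝ) ≤ z := by linarith
  have hNz : (N:ℝ) ≤ z := Nat.floor_le hz0
  have hN2 : 2 ≤ N := Nat.le_floor (by exact_mod_cast hz)
  have hlog2 : (1:ℝ)/2 ≤ Real.log z := by
    have h2 : Real.log 2 ≤ Real.log z := Real.log_le_log (by norm_num) hz
    have := Real.log_two_gt_d9
    linarith
  have hlogz0 : (0:ℝ) ≤ Real.log z := by linarith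
  have hlogN : Real.log N ≤ Real.log z := by
    apply Real.log_le_log (by positivity) hNz
  have hL3 : 1 + Real.log N ≤ 3 * Real.log z := by linarith
  have hL0 : (0:ℝ) ≤ 1 + Real.log N := harm_nonneg N
  -- the weight function
  set W : ℕ × ℕ → ℝ := fun q => ((q.1 : ℝ) * (q.2 : ℝ))⁻¹ *
      ∏ p ∈ (q.2 - q.1).primeFactors, (1 + 1 / (p : ℝ)) ^ c with hWdef
  have hW0 : ∀ q, 0 ≤ W q := by intro q; simp only [hWdef]; positivity
  set P : Finset (ℕ × ℕ) :=
    ((Finset.Icc 2 N) ×ˢ (Finset.Icc 2 N)).filter (fun q => q.1 < q.2) with hPdef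
  -- bound the master finite sum
  have master : ∑ q ∈ P, W q ≤ C * (Real.log z)^2 := by
    set F : ℕ × ℕ → ℝ := fun r => (r.1 : ℝ)⁻¹ *
      ((r.2 : ℝ)⁻¹ * ∏ p ∈ r.2.primeFactors, (1 + 1 / (p : ℝ)) ^ c) with hFdef
    have hF0 : ∀ r, 0 ≤ F r := by intro r; simp only [hFdef]; positivity
    have b1 : ∑ q ∈ P, W q ≤ ∑ q ∈ P, F (q.1, q.2 - q.1) := by
      apply Finset.sum_le_sum
      intro q hq
      simp only [hPdef, Finset.mem_filter, Finset.mem_product, Finset.mem_Icc] at hq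
      obtain ⟨⟨⟨ha2, haN⟩, ⟨hb2, hbN⟩⟩, hab⟩ := hq
      have hd1 : 1 ≤ q.2 - q.1 := by omega
      have hinv : ((q.1 : ℝ) * (q.2 : ℝ))⁻¹ ≤ ((q.1 : ℝ) * ((q.2 - q.1 : ℕ) : ℝ))⁻¹ := by
        apply inv_anti₀
        · have h1 : (0:ℝ) < (q.1:ℝ) := by exact_mod_cast (by omega : 0 < q.1)
          have h2 : (0:ℝ) < ((q.2 - q.1 : ℕ):ℝ) := by exact_mod_cast (by omega : 0 < q.2 - q.1)
          positivity
        · apply mul_le_mul_of_nonneg_left _ (by positivity)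
          exact_mod_cast (by omega : q.2 - q.1 ≤ q.2)
      simp only [hWdef, hFdef]
      calc ((q.1 : ℝ) * (q.2 : ℝ))⁻¹ * ∏ p ∈ (q.2 - q.1).primeFactors, (1 + 1 / (p : ℝ)) ^ c
          ≤ ((q.1 : ℝ) * ((q.2 - q.1 : ℕ) : ℝ))⁻¹ *
              ∏ p ∈ (q.2 - q.1).primeFactors, (1 + 1 / (p : ℝ)) ^ c := by
            apply mul_le_mul_of_nonneg_right hinv (by positivity)
        _ = (q.1 : ℝ)⁻¹ * (((q.2 - q.1 : ℕ) : ℝ)⁻¹ *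
              ∏ p ∈ (q.2 - q.1).primeFactors, (1 + 1 / (p : ℝ)) ^ c) := by
            rw [mul_inv]; ring
    have hinj : ∀ q ∈ P, ∀ q' ∈ P, (q.1, q.2 - q.1) = (q'.1, q'.2 - q'.1) → q = q' := by
      intro q hq q' hq' h
      simp only [hPdef, Finset.mem_filter, Finset.mem_product, Finset.mem_Icc] at hq hq'
      have h1 := congrArg Prod.fst h
      have h2 := congrArg Prod.snd h
      simp only at h1 h2
      have : q.2 = q'.2 := by omega
      exact Prod.ext h1 this
    have b2 : ∑ q ∈ P, F (q.1, q.2 - q.1) = ∑ r ∈ P.image (fun q => (q.1, q.2 - q.1)), F r :=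
      (Finset.sum_image hinj).symm
    have b3 : ∑ r ∈ P.image (fun q => (q.1, q.2 - q.1)), F r
        ≤ ∑ r ∈ (Finset.Icc 1 N) ×ˢ (Finset.Icc 1 N), F r := by
      apply Finset.sum_le_sum_of_subset_of_nonneg
      · intro r hr
        rw [Finset.mem_image] at hr
        obtain ⟨q, hq, rfl⟩ := hr
        simp only [hPdef, Finset.mem_filter, Finset.mem_product, Finset.mem_Icc] at hq
        simp only [Finset.mem_product, Finset.mem_Icc]
        omega
      · intro r _ _; exact hF0 r
    have b4 : ∑ r ∈ (Finset.Icc 1 N) ×ˢ (Finset.Icc 1 N), F r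
        = (∑ a ∈ Finset.Icc 1 N, (a:ℝ)⁻¹) *
          (∑ d ∈ Finset.Icc 1 N, (d:ℝ)⁻¹ * ∏ p ∈ d.primeFactors, (1 + 1 / (p : ℝ)) ^ c) := by
      rw [Finset.sum_product, Finset.sum_mul_sum]
    have b5 : (∑ a ∈ Finset.Icc 1 N, (a:ℝ)⁻¹) *
          (∑ d ∈ Finset.Icc 1 N, (d:ℝ)⁻¹ * ∏ p ∈ d.primeFactors, (1 + 1 / (p : ℝ)) ^ c)
        ≤ (1 + Real.log N) * ((K^T * B) * (1 + Real.log N)) := by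
      apply mul_le_mul (harm_le N) (sum_fd_le c N hc)
      · apply Finset.sum_nonneg; intro d _; positivity
      · exact hL0
    have b6 : (1 + Real.log N) * ((K^T * B) * (1 + Real.log N)) ≤ C * (Real.log z)^2 := by
      have h9 : (1 + Real.log N) * (1 + Real.log N) ≤ (3 * Real.log z) * (3 * Real.log z) :=
        mul_le_mul hL3 hL3 hL0 (by linarith)
      calc (1 + Real.log N) * ((K^T * B) * (1 + Real.log N))
          = (K^T * B) * ((1 + Real.log N) * (1 + Real.log N)) := by ring
        _ ≤ (K^T * B) * ((3 * Real.log z) * (3 * Real.log z)) := by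
            apply mul_le_mul_of_nonneg_left h9 (by positivity)
        _ = 9 * (K^T * B) * (Real.log z)^2 := by ring
        _ ≤ C * (Real.log z)^2 := by
            apply mul_le_mul_of_nonneg_right _ (by positivity)
            simp only [hCdef]; linarith
    calc ∑ q ∈ P, W q ≤ ∑ q ∈ P, F (q.1, q.2 - q.1) := b1
      _ = _ := b2
      _ ≤ _ := b3
      _ = _ := b4
      _ ≤ _ := b5
      _ ≤ _ := b6
  -- reduce tsum to the master sum
  apply tsum_le_of_sum_le'
  · positivity
  · intro s
    have : ∑ x ∈ s, W x.val ≤ ∑ q ∈ P, W q := by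
      rw [← Finset.sum_image (fun x _ y _ h => Subtype.ext h)]
      apply Finset.sum_le_sum_of_subset_of_nonneg
      · intro q hq
        rw [Finset.mem_image] at hq
        obtain ⟨x, _, rfl⟩ := hq
        obtain ⟨h1, h2, h3⟩ := x.2
        simp only [hPdef, Finset.mem_filter, Finset.mem_product, Finset.mem_Icc]
        have hbN : x.val.2 ≤ N := Nat.le_floor h3.le
        exact ⟨⟨⟨by omega, by omega⟩, ⟨by omega, hbN⟩⟩, h2⟩
      · intro q _ _; exact hW0 q
    exact this.trans master
end

section
/- Let $g$ and $c$ be positive integers and fix $j$ with $1 \le j \le g$. Then there is a constant $C$ depending only on $g$ and $c$ such that for all sufficiently large $z$, $\sum_{1 < h_1 < \cdots < h_g < z} \frac{1}{h_1 \cdots h_g} \prod_{p \mid h_j} \left(1 + \frac{1}{p}\right)^{c} \le C (\log z)^g$, where the $h_i$ run over integers and the product is over primes $p$ dividing $h_j$. -/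
open Filter Finset

private lemma aux_pow_bound (c : ℕ) {x : ℝ} (hx0 : 0 ≤ x) (hx1 : x ≤ 1) :
    (1 + x) ^ c ≤ 1 + ((2:ℝ) ^ c - 1) * x := by
  induction c with
  | zero => simp
  | succ c ih =>
    have h1 : (1:ℝ) ≤ 2 ^ c := one_le_pow₀ (by norm_num)
    have he : (1 + x) ^ (c + 1) = (1 + x) ^ c * (1 + x) := pow_succ _ _
    rw [he]
    have h2 : (1 + x) ^ c * (1 + x) ≤ (1 + ((2:ℝ)^c - 1) * x) * (1 + x) :=
      mul_le_mul_of_nonneg_right ih (by linarith)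
    refine h2.trans ?_
    have hxx : x * x ≤ x := by nlinarith
    have h3 : (2:ℝ) ^ (c+1) = 2 * 2 ^ c := by ring
    nlinarith [mul_le_mul_of_nonneg_left hxx (by linarith : (0:ℝ) ≤ (2:ℝ)^c - 1)]

private lemma aux_harm (M : ℕ) : ∑ n ∈ Icc 2 M, ((n:ℝ))⁻¹ ≤ Real.log M := by
  induction M with
  | zero => simp
  | succ M ih =>
    rcases Nat.lt_or_ge M 1 with h0 | hM
    · interval_cases M
      · norm_num
    · rw [Finset.sum_Icc_succ_top (by omega) fun n => ((n:ℝ))⁻¹]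
      have hMpos : (0:ℝ) < M := by exact_mod_cast hM
      have key : ((M:ℝ)+1)⁻¹ ≤ Real.log ((M:ℝ)+1) - Real.log M := by
        have h := Real.log_le_sub_one_of_pos (show (0:ℝ) < (M:ℝ)/((M:ℝ)+1) by positivity)
        rw [Real.log_div (by positivity) (by positivity)] at h
        have heq : (M:ℝ)/((M:ℝ)+1) - 1 = -((M:ℝ)+1)⁻¹ := by field_simp; ring
        rw [heq] at h
        linarith
      push_cast
      linarith

private lemma aux_harm1 (M : ℕ) : ∑ n ∈ Icc 1 M, ((n:ℝ))⁻¹ ≤ 1 + Real.log M := by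
  rcases Nat.lt_or_ge M 1 with h0 | hM
  · interval_cases M
    norm_num
  · have hins : Icc 1 M = insert 1 (Icc 2 M) := by
      ext n; simp only [Finset.mem_Icc, Finset.mem_insert]; omega
    rw [hins, Finset.sum_insert (by simp)]
    have := aux_harm M
    norm_num
    linarith

private lemma aux_sq' (M : ℕ) (hM : 1 ≤ M) :
    ∑ n ∈ Icc 2 M, (((n:ℝ))^2)⁻¹ ≤ 1 - ((M:ℝ))⁻¹ := by
  induction M, hM using Nat.le_induction with
  | base => norm_num
  | succ M hM ih =>
    rw [Finset.sum_Icc_succ_top (by omega) fun n => (((n:ℝ))^2)⁻¹]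
    have hMpos : (1:ℝ) ≤ M := by exact_mod_cast hM
    have key : (((M:ℝ)+1)^2)⁻¹ + ((M:ℝ))⁻¹⁻¹ ≤ 0 ∨ True := Or.inr trivial
    have h1 : (((M:ℝ)+1)^2)⁻¹ ≤ ((M:ℝ))⁻¹ - ((M:ℝ)+1)⁻¹ := by
      rw [inv_sub_inv (by linarith) (by linarith)]
      rw [div_eq_mul_inv]
      have : (M:ℝ) + 1 - M = 1 := by ring
      rw [this, one_mul]
      apply inv_anti₀
      · positivity
      · nlinarith
    push_cast
    linarith

private lemma aux_sq (M : ℕ) : ∑ n ∈ Icc 2 M, (((n:ℝ))^2)⁻¹ ≤ 1 := by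
  rcases Nat.lt_or_ge M 1 with h0 | hM
  · interval_cases M
    norm_num
  · have := aux_sq' M hM
    have hMpos : (0:ℝ) < M := by exact_mod_cast hM
    have : (0:ℝ) ≤ ((M:ℝ))⁻¹ := by positivity
    linarith [aux_sq' M hM]

private lemma aux_div_sum (d M : ℕ) (hd : 0 < d) :
    ∑ n ∈ Icc 2 M, (if d ∣ n then ((n:ℝ))⁻¹ else 0) ≤ ((d:ℝ))⁻¹ * (1 + Real.log M) := by
  classical
  rw [← Finset.sum_filter]
  set F := (Icc 2 M).filter (fun n => d ∣ n) with hF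
  have hinj : ∀ x ∈ F, ∀ y ∈ F, x / d = y / d → x = y := by
    intro x hx y hy hxy
    rw [hF, Finset.mem_filter] at hx hy
    have h1 : x / d * d = x := Nat.div_mul_cancel hx.2
    have h2 : y / d * d = y := Nat.div_mul_cancel hy.2
    rw [← h1, ← h2, hxy]
  have him : F.image (· / d) ⊆ Icc 1 M := by
    intro m hm
    simp only [Finset.mem_image] at hm
    obtain ⟨n, hn, rfl⟩ := hm
    rw [hF, Finset.mem_filter, Finset.mem_Icc] at hn
    rw [Finset.mem_Icc]
    constructor
    · exact (Nat.one_le_div_iff hd).2 (Nat.le_of_dvd (by omega) hn.2)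
    · exact le_trans (Nat.div_le_self _ _) hn.1.2
  have heq : ∑ n ∈ F, ((n:ℝ))⁻¹ = ∑ m ∈ F.image (· / d), ((d:ℝ) * (m:ℝ))⁻¹ := by
    rw [Finset.sum_image hinj]
    refine Finset.sum_congr rfl fun n hn => ?_
    rw [hF, Finset.mem_filter] at hn
    have hd0 : ((d:ℝ)) ≠ 0 := by exact_mod_cast hd.ne'
    have hcast : ((d:ℝ)) * ((n / d : ℕ):ℝ) = (n:ℝ) := by
      rw [Nat.cast_div hn.2 hd0]
      field_simp
    rw [hcast]
  rw [heq]
  have h1 : ∑ m ∈ F.image (· / d), ((d:ℝ)*(m:ℝ))⁻¹ ≤ ∑ m ∈ Icc 1 M, ((d:ℝ)*(m:ℝ))⁻¹ :=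
    Finset.sum_le_sum_of_subset_of_nonneg him (fun m _ _ => by positivity)
  refine h1.trans ?_
  have h2 : ∀ m : ℕ, ((d:ℝ)*(m:ℝ))⁻¹ = (d:ℝ)⁻¹ * ((m:ℝ))⁻¹ := fun m => mul_inv _ _
  simp_rw [h2]
  rw [← Finset.mul_sum]
  exact mul_le_mul_of_nonneg_left (aux_harm1 M) (by positivity)

private lemma aux_powerset_exp (s : Finset ℕ) (a : ℕ → ℝ) (ha : ∀ p ∈ s, 0 ≤ a p) :
    ∑ t ∈ s.powerset, ∏ p ∈ t, a p ≤ Real.exp (∑ p ∈ s, a p) := by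
  have h := Finset.prod_add a (fun _ => (1:ℝ)) s
  simp only [Finset.prod_const_one, mul_one] at h
  calc ∑ t ∈ s.powerset, ∏ p ∈ t, a p = ∏ p ∈ s, (a p + 1) := h.symm
    _ ≤ ∏ p ∈ s, Real.exp (a p) := by
        apply Finset.prod_le_prod
        · intro p hp; linarith [ha p hp]
        · intro p hp; exact Real.add_one_le_exp _
    _ = Real.exp (∑ p ∈ s, a p) := (Real.exp_sum _ _).symm

private lemma aux_weighted (c M : ℕ) (hM : 1 ≤ M) :
    ∑ n ∈ Icc 2 M, ((n:ℝ))⁻¹ * ∏ p ∈ n.primeFactors, (1 + 1/(p:ℝ))^c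
      ≤ Real.exp ((2:ℝ)^c - 1) * (1 + Real.log M) := by
  classical
  set K : ℝ := (2:ℝ)^c - 1 with hKdef
  have hK : 0 ≤ K := by
    rw [hKdef]
    have : (1:ℝ) ≤ 2 ^ c := one_le_pow₀ (by norm_num)
    linarith
  set P := (Nat.primesBelow (M+1)).powerset with hP
  have step1 : ∀ n ∈ Icc 2 M, ((n:ℝ))⁻¹ * ∏ p ∈ n.primeFactors, (1+1/(p:ℝ))^c
      ≤ ∑ t ∈ P, (if (∏ p ∈ t, p) ∣ n then ((n:ℝ))⁻¹ else 0) * ∏ p ∈ t, (K / (p:ℝ)) := by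
    intro n hn
    rw [Finset.mem_Icc] at hn
    have hn0 : (0:ℝ) < n := by exact_mod_cast (show 0 < n by omega)
    have hW : ∏ p ∈ n.primeFactors, (1+1/(p:ℝ))^c ≤ ∏ p ∈ n.primeFactors, (1 + K/(p:ℝ)) := by
      apply Finset.prod_le_prod
      · intro p _; positivity
      · intro p hp
        have hp2 : 2 ≤ p := (Nat.prime_of_mem_primeFactors hp).two_le
        have hp0 : (0:ℝ) < p := by exact_mod_cast (show 0 < p by omega)
        have h1 : (1:ℝ)/p ≤ 1 := by
          rw [div_le_one hp0]
          exact_mod_cast (show 1 ≤ p by omega)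
        have h := aux_pow_bound c (show (0:ℝ) ≤ 1/(p:ℝ) by positivity) h1
        calc (1+1/(p:ℝ))^c ≤ 1 + ((2:ℝ)^c - 1) * (1/(p:ℝ)) := h
          _ = 1 + K/(p:ℝ) := by rw [hKdef]; ring
    have hexp : ∏ p ∈ n.primeFactors, (1 + K/(p:ℝ))
        = ∑ t ∈ n.primeFactors.powerset, ∏ p ∈ t, (K/(p:ℝ)) := by
      have h := Finset.prod_add (fun p : ℕ => K/(p:ℝ)) (fun _ : ℕ => (1:ℝ)) n.primeFactors
      simp only [Finset.prod_const_one, mul_one] at h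
      rw [← h]
      exact Finset.prod_congr rfl fun p _ => by ring
    have hsub : n.primeFactors.powerset ⊆ P := by
      intro t ht
      rw [Finset.mem_powerset] at ht
      rw [hP, Finset.mem_powerset]
      intro p hp
      have hp' := ht hp
      have hpn : p ∣ n := Nat.dvd_of_mem_primeFactors hp'
      have hple : p ≤ n := Nat.le_of_dvd (by omega) hpn
      exact Nat.mem_primesBelow.2 ⟨by omega, Nat.prime_of_mem_primeFactors hp'⟩
    calc ((n:ℝ))⁻¹ * ∏ p ∈ n.primeFactors, (1+1/(p:ℝ))^c
        ≤ ((n:ℝ))⁻¹ * ∑ t ∈ n.primeFactors.powerset, ∏ p ∈ t, (K/(p:ℝ)) := by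
          rw [← hexp]
          exact mul_le_mul_of_nonneg_left hW (by positivity)
      _ = ∑ t ∈ n.primeFactors.powerset,
            (if (∏ p ∈ t, p) ∣ n then ((n:ℝ))⁻¹ else 0) * ∏ p ∈ t, (K/(p:ℝ)) := by
          rw [Finset.mul_sum]
          refine Finset.sum_congr rfl fun t ht => ?_
          rw [Finset.mem_powerset] at ht
          rw [if_pos (dvd_trans (Finset.prod_dvd_prod_of_subset t n.primeFactors _ ht)
            (Nat.prod_primeFactors_dvd n))]
      _ ≤ ∑ t ∈ P, (if (∏ p ∈ t, p) ∣ n then ((n:ℝ))⁻¹ else 0) * ∏ p ∈ t, (K/(p:ℝ)) := by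
          apply Finset.sum_le_sum_of_subset_of_nonneg hsub
          intro t _ _
          apply mul_nonneg
          · split_ifs
            · positivity
            · exact le_rfl
          · exact Finset.prod_nonneg fun p _ => div_nonneg hK (by positivity)
  have step2 : ∑ n ∈ Icc 2 M, ((n:ℝ))⁻¹ * ∏ p ∈ n.primeFactors, (1+1/(p:ℝ))^c
      ≤ ∑ t ∈ P, ∑ n ∈ Icc 2 M,
        (if (∏ p ∈ t, p) ∣ n then ((n:ℝ))⁻¹ else 0) * ∏ p ∈ t, (K/(p:ℝ)) := by
    rw [Finset.sum_comm]
    exact Finset.sum_le_sum step1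
  have step3 : ∀ t ∈ P, ∑ n ∈ Icc 2 M,
      (if (∏ p ∈ t, p) ∣ n then ((n:ℝ))⁻¹ else 0) * ∏ p ∈ t, (K/(p:ℝ))
      ≤ (1 + Real.log M) * ∏ p ∈ t, (K/((p:ℝ)^2)) := by
    intro t ht
    rw [hP, Finset.mem_powerset] at ht
    have hprime : ∀ p ∈ t, p.Prime := fun p hp => Nat.prime_of_mem_primesBelow (ht hp)
    have hd : 0 < ∏ p ∈ t, p := Finset.prod_pos fun p hp => (hprime p hp).pos
    have hw : 0 ≤ ∏ p ∈ t, (K/(p:ℝ)) :=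
      Finset.prod_nonneg fun p _ => div_nonneg hK (by positivity)
    rw [← Finset.sum_mul]
    have h1 := aux_div_sum (∏ p ∈ t, p) M hd
    have h2 : (((∏ p ∈ t, p : ℕ)):ℝ)⁻¹ * ∏ p ∈ t, (K/(p:ℝ)) = ∏ p ∈ t, (K/((p:ℝ)^2)) := by
      push_cast
      rw [← Finset.prod_inv_distrib, ← Finset.prod_mul_distrib]
      refine Finset.prod_congr rfl fun p hp => ?_
      have hp0 : ((p:ℝ)) ≠ 0 := by
        exact_mod_cast (hprime p hp).pos.ne'
      rw [pow_two]
      field_simp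
    have hlogM : 0 ≤ Real.log M := Real.log_nonneg (by exact_mod_cast hM)
    calc (∑ n ∈ Icc 2 M, (if (∏ p ∈ t, p) ∣ n then ((n:ℝ))⁻¹ else 0)) * ∏ p ∈ t, (K/(p:ℝ))
        ≤ ((((∏ p ∈ t, p : ℕ)):ℝ)⁻¹ * (1 + Real.log M)) * ∏ p ∈ t, (K/(p:ℝ)) :=
          mul_le_mul_of_nonneg_right h1 hw
      _ = (1 + Real.log M) * ((((∏ p ∈ t, p : ℕ)):ℝ)⁻¹ * ∏ p ∈ t, (K/(p:ℝ))) := by ring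
      _ = (1 + Real.log M) * ∏ p ∈ t, (K/((p:ℝ)^2)) := by rw [h2]
  have step5 : ∑ t ∈ P, ∏ p ∈ t, (K/((p:ℝ)^2)) ≤ Real.exp K := by
    have h := aux_powerset_exp (Nat.primesBelow (M+1)) (fun p => K/((p:ℝ)^2))
      (fun p _ => div_nonneg hK (by positivity))
    rw [← hP] at h
    refine h.trans ?_
    rw [Real.exp_le_exp]
    have hss : Nat.primesBelow (M+1) ⊆ Icc 2 M := by
      intro p hp
      have h1 := Nat.prime_of_mem_primesBelow hp
      have h2 := Nat.lt_of_mem_primesBelow hp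
      rw [Finset.mem_Icc]
      exact ⟨h1.two_le, by omega⟩
    calc ∑ p ∈ Nat.primesBelow (M+1), K/((p:ℝ)^2)
        ≤ ∑ p ∈ Icc 2 M, K/((p:ℝ)^2) :=
          Finset.sum_le_sum_of_subset_of_nonneg hss
            (fun p _ _ => div_nonneg hK (by positivity))
      _ = K * ∑ p ∈ Icc 2 M, (((p:ℝ))^2)⁻¹ := by
          rw [Finset.mul_sum]
          exact Finset.sum_congr rfl fun p _ => by rw [div_eq_mul_inv]
      _ ≤ K * 1 := mul_le_mul_of_nonneg_left (aux_sq M) hK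
      _ = K := mul_one K
  have hlogM : 0 ≤ Real.log M := Real.log_nonneg (by exact_mod_cast hM)
  calc ∑ n ∈ Icc 2 M, ((n:ℝ))⁻¹ * ∏ p ∈ n.primeFactors, (1+1/(p:ℝ))^c
      ≤ ∑ t ∈ P, ∑ n ∈ Icc 2 M,
          (if (∏ p ∈ t, p) ∣ n then ((n:ℝ))⁻¹ else 0) * ∏ p ∈ t, (K/(p:ℝ)) := step2
    _ ≤ ∑ t ∈ P, (1 + Real.log M) * ∏ p ∈ t, (K/((p:ℝ)^2)) := Finset.sum_le_sum step3
    _ = (1 + Real.log M) * ∑ t ∈ P, ∏ p ∈ t, (K/((p:ℝ)^2)) := by rw [Finset.mul_sum]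
    _ ≤ (1 + Real.log M) * Real.exp K := mul_le_mul_of_nonneg_left step5 (by linarith)
    _ = Real.exp K * (1 + Real.log M) := mul_comm _ _

theorem sum_chains_single_weight_le (g c : ℕ) (hg : 0 < g) (hc : 0 < c) (j : Fin g) :
    ∃ C : ℝ, 0 < C ∧ ∀ᶠ z : ℝ in atTop,
      (∑' h : {h : Fin g → ℕ // StrictMono h ∧ ∀ i, 1 < h i ∧ (h i : ℝ) < z},
          (∏ i, (h.1 i : ℝ))⁻¹ * ∏ p ∈ (h.1 j).primeFactors, (1 + 1 / (p : ℝ)) ^ c)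
        ≤ C * (Real.log z) ^ g := by
  classical
  set K : ℝ := (2:ℝ)^c - 1 with hKdef
  refine ⟨2 * Real.exp K, by positivity, ?_⟩
  filter_upwards [eventually_ge_atTop (3:ℝ)] with z hz3
  have hz0 : (0:ℝ) ≤ z := by linarith
  set M := ⌊z⌋₊ with hMdef
  have hM1 : 1 ≤ M := by
    rw [hMdef]
    exact Nat.le_floor (by push_cast; linarith)
  have hMr : (1:ℝ) ≤ M := by exact_mod_cast hM1
  have hlogz1 : 1 ≤ Real.log z := by
    have h3 : Real.exp 1 ≤ 3 := le_of_lt (lt_of_lt_of_le Real.exp_one_lt_d9 (by norm_num))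
    calc (1:ℝ) = Real.log (Real.exp 1) := (Real.log_exp 1).symm
      _ ≤ Real.log z := Real.log_le_log (Real.exp_pos 1) (h3.trans hz3)
  have hlogM : Real.log M ≤ Real.log z := by
    apply Real.log_le_log (by positivity)
    exact Nat.floor_le hz0
  set W : ℕ → ℝ := fun n => ∏ p ∈ n.primeFactors, (1 + 1/(p:ℝ))^c with hWdef
  have hW0 : ∀ n, 0 ≤ W n := fun n =>
    Finset.prod_nonneg fun p _ => pow_nonneg (by positivity) _
  set f : (Fin g → ℕ) → ℝ := fun h => (∏ i, ((h i : ℕ):ℝ))⁻¹ * W (h j) with hfdef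
  set S : Set (Fin g → ℕ) := {h | StrictMono h ∧ ∀ i, 1 < h i ∧ (h i:ℝ) < z} with hSdef
  set A := Fintype.piFinset fun _ : Fin g => Finset.range (M+1) with hAdef
  set v : Fin g → ℕ → ℝ := fun i n =>
    (if 1 < n ∧ (n:ℝ) < z then ((n:ℝ))⁻¹ else 0) * (if i = j then W n else 1) with hvdef
  have hv0 : ∀ i n, 0 ≤ v i n := by
    intro i n
    rw [hvdef]
    apply mul_nonneg
    · split_ifs
      · positivity
      · exact le_rfl
    · split_ifs
      · exact hW0 n
      · norm_num
  have h1 : (∑' h : {h : Fin g → ℕ // StrictMono h ∧ ∀ i, 1 < h i ∧ (h i : ℝ) < z},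
      (∏ i, (h.1 i : ℝ))⁻¹ * ∏ p ∈ (h.1 j).primeFactors, (1 + 1 / (p : ℝ)) ^ c)
      = ∑' x : (Fin g → ℕ), S.indicator f x := tsum_subtype S f
  rw [h1]
  have hA : ∀ h ∉ A, S.indicator f h = 0 := by
    intro h hh
    apply Set.indicator_of_notMem
    intro hS
    rw [hAdef, Fintype.mem_piFinset] at hh
    push_neg at hh
    obtain ⟨i, hi⟩ := hh
    rw [Finset.mem_range, not_lt] at hi
    have h2 : (h i : ℝ) < z := (hS.2 i).2
    have h3 : ((M:ℝ)) + 1 ≤ (h i : ℝ) := by exact_mod_cast hi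
    have h4 : z < (M:ℝ) + 1 := by
      rw [hMdef]
      exact_mod_cast Nat.lt_floor_add_one z
    linarith
  rw [tsum_eq_sum hA]
  have hbound : ∑ h ∈ A, S.indicator f h ≤ ∑ h ∈ A, ∏ i, v i (h i) := by
    apply Finset.sum_le_sum
    intro h _
    by_cases hS : h ∈ S
    · rw [Set.indicator_of_mem hS]
      have heq : ∏ i, v i (h i) = f h := by
        have h1' : ∀ i, v i (h i) = ((h i:ℕ):ℝ)⁻¹ * (if i = j then W (h i) else 1) := by
          intro i
          rw [hvdef]
          simp only
          rw [if_pos ⟨(hS.2 i).1, (hS.2 i).2⟩]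
        rw [Finset.prod_congr rfl (fun i _ => h1' i), Finset.prod_mul_distrib]
        rw [Finset.prod_ite_eq' Finset.univ j (fun i => W (h i))]
        rw [if_pos (Finset.mem_univ j), Finset.prod_inv_distrib]
      rw [heq]
    · rw [Set.indicator_of_notMem hS]
      exact Finset.prod_nonneg fun i _ => hv0 i (h i)
  have hfact : ∑ h ∈ A, ∏ i, v i (h i) = ∏ i, ∑ n ∈ Finset.range (M+1), v i n := by
    rw [hAdef]
    exact (Finset.prod_univ_sum _ _).symm
  have hfilter : (Finset.range (M+1)).filter (fun n => 2 ≤ n) = Icc 2 M := by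
    ext n
    simp only [Finset.mem_filter, Finset.mem_Icc, Finset.mem_range]
    omega
  have hbase : ∀ b : ℕ → ℝ, (∀ n, 0 ≤ b n) →
      ∑ n ∈ Finset.range (M+1), (if 1 < n ∧ (n:ℝ) < z then ((n:ℝ))⁻¹ else 0) * b n
        ≤ ∑ n ∈ Icc 2 M, ((n:ℝ))⁻¹ * b n := by
    intro b hb
    rw [← hfilter, Finset.sum_filter]
    apply Finset.sum_le_sum
    intro n _
    by_cases hcond : 1 < n ∧ (n:ℝ) < z
    · rw [if_pos hcond, if_pos (show 2 ≤ n by omega)]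
    · rw [if_neg hcond, zero_mul]
      split_ifs with h2
      · exact mul_nonneg (by positivity) (hb n)
      · exact le_rfl
  set T : Fin g → ℝ := fun i => ∑ n ∈ Finset.range (M+1), v i n with hTdef
  have hT0 : ∀ i, 0 ≤ T i := fun i => Finset.sum_nonneg fun n _ => hv0 i n
  have hTne : ∀ i, i ≠ j → T i ≤ Real.log z := by
    intro i hij
    rw [hTdef]
    simp only
    have : ∀ n ∈ Finset.range (M+1), v i n
        = (if 1 < n ∧ (n:ℝ) < z then ((n:ℝ))⁻¹ else 0) * (fun _ : ℕ => (1:ℝ)) n := by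
      intro n _
      rw [hvdef]
      simp only [if_neg hij, mul_one]
    rw [Finset.sum_congr rfl this]
    refine (hbase (fun _ => 1) (fun _ => zero_le_one)).trans ?_
    simp only [mul_one]
    exact (aux_harm M).trans hlogM
  have hTj : T j ≤ Real.exp K * (2 * Real.log z) := by
    rw [hTdef]
    simp only
    have : ∀ n ∈ Finset.range (M+1), v j n
        = (if 1 < n ∧ (n:ℝ) < z then ((n:ℝ))⁻¹ else 0) * W n := by
      intro n _
      rw [hvdef]
      simp
    rw [Finset.sum_congr rfl this]
    refine (hbase W hW0).trans ?_
    have := aux_weighted c M hM1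
    rw [hWdef]
    refine this.trans ?_
    rw [← hKdef]
    have hexp : (0:ℝ) ≤ Real.exp K := (Real.exp_pos K).le
    have : 1 + Real.log M ≤ 2 * Real.log z := by linarith
    exact mul_le_mul_of_nonneg_left this hexp
  have hprod : ∏ i, T i ≤ (Real.exp K * (2 * Real.log z)) * (Real.log z)^(g-1) := by
    rw [← Finset.mul_prod_erase Finset.univ T (Finset.mem_univ j)]
    have h2 : ∏ i ∈ Finset.univ.erase j, T i ≤ (Real.log z)^(g-1) := by
      calc ∏ i ∈ Finset.univ.erase j, T i
          ≤ ∏ i ∈ Finset.univ.erase j, Real.log z :=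
            Finset.prod_le_prod (fun i _ => hT0 i)
              (fun i hi => hTne i (Finset.ne_of_mem_erase hi))
        _ = (Real.log z)^(g-1) := by
            rw [Finset.prod_const, Finset.card_erase_of_mem (Finset.mem_univ j),
              Finset.card_univ, Fintype.card_fin]
    exact mul_le_mul hTj h2 (Finset.prod_nonneg fun i _ => hT0 i) (by positivity)
  have hpow : Real.log z * (Real.log z)^(g-1) = (Real.log z)^g := by
    rw [← pow_succ']
    congr 1
    omega
  calc ∑ h ∈ A, S.indicator f h ≤ ∑ h ∈ A, ∏ i, v i (h i) := hbound
    _ = ∏ i, T i := hfact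
    _ ≤ (Real.exp K * (2 * Real.log z)) * (Real.log z)^(g-1) := hprod
    _ = 2 * Real.exp K * (Real.log z * (Real.log z)^(g-1)) := by ring
    _ = 2 * Real.exp K * (Real.log z)^g := by rw [hpow]
end

section
/- Let $k \ge 2$ be a fixed integer and let $\theta \in [\tfrac{1}{2k}, \tfrac{17}{32k})$. Define $\mathcal{S}(x) = \sum_{(x/2)^{\theta} < p \le x^{1/k}} \frac{1}{p} \Big( \sum_{q \le x,\; q \equiv 1 \pmod p} \frac{1}{q} \Big)^{k-1}$, where $p$ and $q$ run over primes. Then there is a constant $C$ depending only on $k$ such that for all sufficiently large $x$, $\mathcal{S}(x) \le C \sum_{g=1}^{k-1} \sum_{1 < h_1 < \cdots < h_g < 2^{\theta} x^{1-\theta}} \frac{1}{h_1 \cdots h_g} \sum_{\substack{(x/2)^{\theta} < p \le x^{1/k} \\ h_j p + 1 \text{ prime for } 1 \le j \le g}} \frac{1}{p^k}$, where the $h_i$ run over integers and the innermost sum is over primes $p$. -/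
open Filter

/-- `S k θ x = ∑_{(x/2)^θ < p ≤ x^{1/k}} p⁻¹ (∑_{q ≤ x, q ≡ 1 (mod p)} q⁻¹)^{k-1}`,
where `p` and `q` run over primes. -/
noncomputable def S (k : ℕ) (θ : ℝ) (x : ℝ) : ℝ :=
  ∑' p : {p : ℕ // p.Prime ∧ (x / 2) ^ θ < (p : ℝ) ∧ (p : ℝ) ≤ x ^ ((1 : ℝ) / k)},
    (p.1 : ℝ)⁻¹ *
      (∑' q : {q : ℕ // q.Prime ∧ (q : ℝ) ≤ x ∧ q % p.1 = 1}, (q.1 : ℝ)⁻¹) ^ (k - 1)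

open Finset

lemma tsum_pred_eq_sum {α : Type*} (f : α → ℝ) {pred : α → Prop} {s : Finset α}
    (hs : ∀ a, pred a ↔ a ∈ s) :
    ∑' (a : {a : α // pred a}), f a.1 = ∑ a ∈ s, f a := by
  rw [← Finset.tsum_subtype s f]
  exact ((Equiv.subtypeEquivRight fun a => (hs a).symm).tsum_eq
    (fun a : {a : α // pred a} => f a.1)).symm.trans
    (tsum_congr fun a => by rw [Equiv.subtypeEquivRight_apply])


lemma lemA (m : ℕ) (hm : 1 ≤ m) (Hp : Finset ℕ) (hHp : ∀ h ∈ Hp, 2 ≤ h) :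
    (∑ h ∈ Hp, (h : ℝ)⁻¹) ^ m ≤
      (m : ℝ) ^ m * ∑ s ∈ Hp.powerset.filter (fun s => 1 ≤ s.card ∧ s.card ≤ m),
        ∏ h ∈ s, (h : ℝ)⁻¹ := by
  classical
  have h1 : (∑ h ∈ Hp, (h : ℝ)⁻¹) ^ m
      = ∑ f ∈ Fintype.piFinset (fun _ : Fin m => Hp), ∏ i, ((f i : ℝ))⁻¹ := by
    rw [← Finset.prod_univ_sum (fun _ : Fin m => Hp) (fun _ h => (h : ℝ)⁻¹)]
    simp
  rw [h1]
  have h2 : ∀ f ∈ Fintype.piFinset (fun _ : Fin m => Hp),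
      ∏ i, ((f i : ℝ))⁻¹ ≤ ∏ h ∈ Finset.image f univ, (h : ℝ)⁻¹ := by
    intro f hf
    rw [Finset.prod_comp (fun h : ℕ => (h : ℝ)⁻¹) f]
    refine Finset.prod_le_prod (fun h _ => by positivity) ?_
    intro h hmem
    obtain ⟨i, _, hi⟩ := Finset.mem_image.mp hmem
    have hcard : 1 ≤ (univ.filter fun a => f a = h).card := by
      refine Finset.card_pos.mpr ⟨i, ?_⟩
      simp [hi]
    have h2h : 2 ≤ h := hHp h (hi ▸ (Fintype.mem_piFinset.mp hf i))
    have h01 : ((h : ℝ))⁻¹ ≤ 1 := by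
      rw [inv_le_one₀ (by positivity)]; exact_mod_cast le_trans one_le_two h2h
    calc ((h:ℝ)⁻¹) ^ (univ.filter fun a => f a = h).card ≤ ((h:ℝ)⁻¹) ^ 1 :=
          pow_le_pow_of_le_one (by positivity) h01 hcard
      _ = (h:ℝ)⁻¹ := pow_one _
  refine le_trans (Finset.sum_le_sum h2) ?_
  rw [Finset.sum_comp (fun s : Finset ℕ => ∏ h ∈ s, (h : ℝ)⁻¹) (fun f => Finset.image f univ)]
  have h3 : ∀ s ∈ (Fintype.piFinset (fun _ : Fin m => Hp)).image (fun f => Finset.image f univ),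
      ((Fintype.piFinset (fun _ : Fin m => Hp)).filter
        (fun f => Finset.image f univ = s)).card ≤ m ^ m := by
    intro s hs
    obtain ⟨f0, _, hf0⟩ := Finset.mem_image.mp hs
    have hscard : s.card ≤ m := by
      rw [← hf0]; exact le_trans Finset.card_image_le (by simp)
    have hsub : (Fintype.piFinset (fun _ : Fin m => Hp)).filter
        (fun f => Finset.image f univ = s) ⊆ Fintype.piFinset (fun _ : Fin m => s) := by
      intro f hf
      rw [Finset.mem_filter] at hf
      rw [Fintype.mem_piFinset]
      intro i
      rw [← hf.2]
      exact Finset.mem_image_of_mem f (mem_univ i)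
    calc _ ≤ (Fintype.piFinset (fun _ : Fin m => s)).card := Finset.card_le_card hsub
      _ = s.card ^ m := by simp [Fintype.card_piFinset_const]
      _ ≤ m ^ m := Nat.pow_le_pow_left hscard m
  have h4 : ∀ s ∈ (Fintype.piFinset (fun _ : Fin m => Hp)).image (fun f => Finset.image f univ),
      ((Fintype.piFinset (fun _ : Fin m => Hp)).filter
        (fun f => Finset.image f univ = s)).card • (∏ h ∈ s, (h : ℝ)⁻¹)
        ≤ (m:ℝ)^m * ∏ h ∈ s, (h : ℝ)⁻¹ := by
    intro s hs
    rw [nsmul_eq_mul]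
    refine mul_le_mul_of_nonneg_right ?_ (by positivity)
    calc (_ : ℝ) ≤ ((m^m : ℕ) : ℝ) := by exact_mod_cast h3 s hs
      _ = (m:ℝ)^m := by push_cast; ring
  refine le_trans (Finset.sum_le_sum h4) ?_
  rw [← Finset.mul_sum]
  refine mul_le_mul_of_nonneg_left ?_ (by positivity)
  refine Finset.sum_le_sum_of_subset_of_nonneg ?_ (fun s _ _ => by positivity)
  intro s hs
  obtain ⟨f0, hf0mem, hf0⟩ := Finset.mem_image.mp hs
  rw [Finset.mem_filter, Finset.mem_powerset]
  refine ⟨?_, ?_, ?_⟩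
  · rw [← hf0]
    intro a ha
    obtain ⟨i, _, hi⟩ := Finset.mem_image.mp ha
    exact hi ▸ (Fintype.mem_piFinset.mp hf0mem i)
  · rw [← hf0]
    refine Finset.card_pos.mpr ?_
    exact ⟨f0 ⟨0, hm⟩, Finset.mem_image_of_mem _ (mem_univ _)⟩
  · rw [← hf0]; exact le_trans Finset.card_image_le (by simp)


lemma lemB (m : ℕ) (Hp : Finset ℕ) :
    ∑ s ∈ Hp.powerset.filter (fun s => 1 ≤ s.card ∧ s.card ≤ m), ∏ h ∈ s, (h : ℝ)⁻¹
      ≤ ∑ g ∈ Finset.Icc 1 m,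
          ∑ t ∈ (Fintype.piFinset (fun _ : Fin g => Hp)).filter (fun t => StrictMono t),
            ∏ i, ((t i : ℝ))⁻¹ := by
  classical
  set A := Hp.powerset.filter (fun s => 1 ≤ s.card ∧ s.card ≤ m) with hA
  have hmaps : ∀ s ∈ A, s.card ∈ Finset.Icc 1 m := by
    intro s hs
    rw [hA, Finset.mem_filter] at hs
    exact Finset.mem_Icc.mpr hs.2
  rw [← Finset.sum_fiberwise_of_maps_to hmaps (fun s => ∏ h ∈ s, (h : ℝ)⁻¹)]
  refine Finset.sum_le_sum ?_
  intro g hg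
  -- injection s ↦ its sorted enumeration
  set e : Finset ℕ → (Fin g → ℕ) := fun s =>
    if h : s.card = g then (fun i => s.orderEmbOfFin h i) else (fun _ => 0) with he
  have key : ∀ s ∈ A.filter (fun s => s.card = g),
      (Finset.image (e s) univ = s) ∧ StrictMono (e s) ∧ (∀ i, e s i ∈ s) := by
    intro s hs
    rw [Finset.mem_filter] at hs
    have hc : s.card = g := hs.2
    have he1 : e s = fun i => s.orderEmbOfFin hc i := by rw [he]; simp [hc]
    refine ⟨?_, ?_, ?_⟩
    · ext a
      rw [he1, Finset.mem_image]
      constructor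
      · rintro ⟨i, _, rfl⟩; exact Finset.orderEmbOfFin_mem s hc i
      · intro ha
        have : a ∈ Set.range (s.orderEmbOfFin hc) := by
          rw [Finset.range_orderEmbOfFin]; exact ha
        obtain ⟨i, hi⟩ := this
        exact ⟨i, mem_univ i, hi⟩
    · rw [he1]; exact (s.orderEmbOfFin hc).strictMono
    · intro i; rw [he1]; exact Finset.orderEmbOfFin_mem s hc i
  have hterm : ∀ s ∈ A.filter (fun s => s.card = g),
      ∏ h ∈ s, (h : ℝ)⁻¹ = ∏ i, ((e s i : ℝ))⁻¹ := by
    intro s hs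
    obtain ⟨himg, hmono, _⟩ := key s hs
    have := Finset.prod_image (s := (univ : Finset (Fin g))) (g := e s)
      (f := fun h : ℕ => (h : ℝ)⁻¹) (fun a _ b _ h => hmono.injective h)
    rw [himg] at this
    simpa using this
  rw [Finset.sum_congr rfl hterm]
  have hinj : ∀ s ∈ A.filter (fun s => s.card = g), ∀ s' ∈ A.filter (fun s => s.card = g),
      e s = e s' → s = s' := by
    intro s hs s' hs' hss
    have h1 := (key s hs).1
    have h2 := (key s' hs').1
    rw [← h1, ← h2, hss]
  have hsi := Finset.sum_image (s := A.filter (fun s => s.card = g)) (g := e)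
    (f := fun t : Fin g → ℕ => ∏ i, ((t i : ℝ))⁻¹) (fun a ha b hb hab => hinj a ha b hb hab)
  rw [← hsi]
  refine Finset.sum_le_sum_of_subset_of_nonneg ?_ (fun t _ _ => by positivity)
  intro t ht
  obtain ⟨s, hs, rfl⟩ := Finset.mem_image.mp ht
  obtain ⟨himg, hmono, hmem⟩ := key s hs
  rw [Finset.mem_filter]
  refine ⟨Fintype.mem_piFinset.mpr fun i => ?_, hmono⟩
  have hsA : s ∈ A := (Finset.mem_filter.mp hs).1
  rw [hA, Finset.mem_filter, Finset.mem_powerset] at hsA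
  exact hsA.1 (hmem i)

set_option maxHeartbeats 1000000 in
theorem S_le_sum_over_chains (k : ℕ) (hk : 2 ≤ k) :
    ∃ C : ℝ, 0 < C ∧
      ∀ θ : ℝ, 1 / (2 * k) ≤ θ → θ < 17 / (32 * k) →
        ∀ᶠ x : ℝ in atTop,
          S k θ x ≤
            C * ∑ g ∈ Finset.Icc 1 (k - 1),
              ∑' h : {h : Fin g → ℕ //
                  StrictMono h ∧ ∀ i, 1 < h i ∧ (h i : ℝ) < (2 : ℝ) ^ θ * x ^ (1 - θ)},
                (∏ i, (h.1 i : ℝ))⁻¹ *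
                  ∑' p : {p : ℕ // p.Prime ∧ (x / 2) ^ θ < (p : ℝ) ∧ (p : ℝ) ≤ x ^ ((1 : ℝ) / k) ∧
                      ∀ j, (h.1 j * p + 1).Prime},
                    ((p.1 : ℝ) ^ k)⁻¹ := by
  classical
  obtain ⟨m, rfl⟩ : ∃ m, k = m + 1 := ⟨k - 1, by omega⟩
  have hm : 1 ≤ m := by omega
  refine ⟨(m : ℝ) ^ m, by positivity, ?_⟩
  intro θ hθ1 hθ2
  filter_upwards [eventually_ge_atTop (2 * 4 ^ (2 * (m + 1)) : ℝ)] with x hx1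
  -- basic positivity facts
  have h4pow : (1 : ℝ) ≤ 4 ^ (2 * (m + 1)) := one_le_pow₀ (by norm_num)
  have hx2 : (2 : ℝ) ≤ x := by nlinarith
  have hx0 : (0 : ℝ) < x := by linarith
  have hθ0 : 0 < θ := by
    have : (0:ℝ) < 1 / (2 * (m + 1 : ℕ)) := by positivity
    linarith
  -- (x/2)^θ > 3
  have hpow3 : (3 : ℝ) < (x / 2) ^ θ := by
    have h1 : (4 : ℝ) ^ (2 * (m + 1)) ≤ x / 2 := by linarith
    have h2 : (1 : ℝ) ≤ x / 2 := le_trans h4pow h1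
    have h3 : (x / 2) ^ ((1 : ℝ) / (2 * (m + 1 : ℕ))) ≤ (x / 2) ^ θ := by
      apply Real.rpow_le_rpow_of_exponent_le h2
      calc (1 : ℝ) / (2 * (m + 1 : ℕ)) = 1 / (2 * ((m+1 : ℕ) : ℝ)) := by norm_num
        _ ≤ θ := hθ1
    have h4 : (4 : ℝ) ≤ (x / 2) ^ ((1 : ℝ) / (2 * (m + 1 : ℕ))) := by
      have h5 : ((4 : ℝ) ^ (2 * (m + 1))) ^ ((1 : ℝ) / (2 * (m + 1 : ℕ)))
          ≤ (x / 2) ^ ((1 : ℝ) / (2 * (m + 1 : ℕ))) :=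
        Real.rpow_le_rpow (by positivity) h1 (by positivity)
      have h6 : ((4 : ℝ) ^ (2 * (m + 1))) ^ ((1 : ℝ) / (2 * (m + 1 : ℕ))) = 4 := by
        rw [← Real.rpow_natCast 4 (2 * (m + 1)), ← Real.rpow_mul (by norm_num)]
        rw [show ((2 * (m + 1) : ℕ) : ℝ) * ((1 : ℝ) / (2 * (m + 1 : ℕ))) = 1 by
          push_cast; field_simp]
        exact Real.rpow_one 4
      linarith [h6 ▸ h5]
    linarith
  have hpowpos : (0 : ℝ) < (x / 2) ^ θ := by linarith
  set B : ℝ := (2 : ℝ) ^ θ * x ^ (1 - θ) with hBdef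
  have hBeq : x / (x / 2) ^ θ = B := by
    have hxt : (0 : ℝ) < x ^ θ := Real.rpow_pos_of_pos hx0 θ
    have h2t : (0 : ℝ) < (2 : ℝ) ^ θ := Real.rpow_pos_of_pos (by norm_num) θ
    rw [hBdef, Real.div_rpow (le_of_lt hx0) (by norm_num : (0:ℝ) ≤ 2),
      Real.rpow_sub hx0, Real.rpow_one]
    field_simp
  have hB0 : 0 ≤ B := by
    rw [← hBeq]; positivity
  set M : ℕ := ⌊B⌋₊ + 1 with hMdef
  set N1 : ℕ := ⌊x ^ ((1 : ℝ) / ((m + 1 : ℕ) : ℝ))⌋₊ + 1 with hN1def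
  set P : Finset ℕ := (Finset.range N1).filter
    (fun p => p.Prime ∧ (x / 2) ^ θ < (p : ℝ) ∧ (p : ℝ) ≤ x ^ ((1 : ℝ) / ((m + 1 : ℕ) : ℝ)))
    with hPdef
  set Q : ℕ → Finset ℕ := fun p => (Finset.range (⌊x⌋₊ + 1)).filter
    (fun q => q.Prime ∧ (q : ℝ) ≤ x ∧ q % p = 1) with hQdef
  set Hf : ℕ → Finset ℕ := fun p => (Finset.range M).filter
    (fun h => 1 < h ∧ (h : ℝ) < B ∧ (h * p + 1).Prime) with hHfdef
  set Cg : (g : ℕ) → Finset (Fin g → ℕ) := fun g =>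
    (Fintype.piFinset (fun _ : Fin g => Finset.range M)).filter
      (fun h => StrictMono h ∧ ∀ i, 1 < h i ∧ (h i : ℝ) < B) with hCgdef
  set Ph : (g : ℕ) → (Fin g → ℕ) → Finset ℕ := fun g h =>
    P.filter (fun p => ∀ j, (h j * p + 1).Prime) with hPhdef
  -- membership characterizations
  have hPmem : ∀ p : ℕ,
      (p.Prime ∧ (x / 2) ^ θ < (p : ℝ) ∧ (p : ℝ) ≤ x ^ ((1 : ℝ) / ((m + 1 : ℕ) : ℝ)))
        ↔ p ∈ P := by
    intro p
    rw [hPdef, Finset.mem_filter, Finset.mem_range, hN1def]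
    constructor
    · intro hp
      exact ⟨Nat.lt_succ_of_le (Nat.le_floor hp.2.2), hp⟩
    · exact fun hp => hp.2
  have hQmem : ∀ p q : ℕ, (q.Prime ∧ (q : ℝ) ≤ x ∧ q % p = 1) ↔ q ∈ Q p := by
    intro p q
    rw [hQdef]
    rw [Finset.mem_filter, Finset.mem_range]
    constructor
    · intro hq
      exact ⟨Nat.lt_succ_of_le (Nat.le_floor hq.2.1), hq⟩
    · exact fun hq => hq.2
  have hCmem : ∀ g : ℕ, ∀ h : Fin g → ℕ,
      (StrictMono h ∧ ∀ i, 1 < h i ∧ (h i : ℝ) < B) ↔ h ∈ Cg g := by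
    intro g h
    rw [hCgdef]
    rw [Finset.mem_filter, Fintype.mem_piFinset]
    constructor
    · intro hh
      refine ⟨fun i => Finset.mem_range.mpr ?_, hh⟩
      exact Nat.lt_succ_of_le (Nat.le_floor (le_of_lt (hh.2 i).2))
    · exact fun hh => hh.2
  have hPhmem : ∀ g : ℕ, ∀ h : Fin g → ℕ, ∀ p : ℕ,
      (p.Prime ∧ (x / 2) ^ θ < (p : ℝ) ∧ (p : ℝ) ≤ x ^ ((1 : ℝ) / ((m + 1 : ℕ) : ℝ)) ∧
        ∀ j, (h j * p + 1).Prime) ↔ p ∈ Ph g h := by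
    intro g h p
    rw [hPhdef]
    rw [Finset.mem_filter, ← hPmem]
    tauto
  -- conversion of S to finite sums
  have hSconv : S (m + 1) θ x = ∑ p ∈ P, (p : ℝ)⁻¹ * (∑ q ∈ Q p, (q : ℝ)⁻¹) ^ m := by
    unfold S
    rw [tsum_pred_eq_sum (fun n : ℕ => (n : ℝ)⁻¹ *
      (∑' q : {q : ℕ // q.Prime ∧ (q : ℝ) ≤ x ∧ q % n = 1}, (q.1 : ℝ)⁻¹) ^ (m + 1 - 1))
      hPmem]
    refine Finset.sum_congr rfl fun p hp => ?_
    rw [tsum_pred_eq_sum (fun q : ℕ => (q : ℝ)⁻¹) (hQmem p)]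
    norm_num
  -- per-p key inequality
  have key : ∀ p ∈ P,
      (p : ℝ)⁻¹ * (∑ q ∈ Q p, (q : ℝ)⁻¹) ^ m ≤
        (m : ℝ) ^ m * ∑ g ∈ Finset.Icc 1 m,
          ∑ h ∈ (Cg g).filter (fun h => ∀ j, (h j * p + 1).Prime),
            ((p : ℝ) ^ (m + 1))⁻¹ * ∏ i, ((h i : ℝ))⁻¹ := by
    intro p hpP
    obtain ⟨hpr, hplt, hple⟩ := (hPmem p).mpr hpP
    have hp3 : (3 : ℝ) < (p : ℝ) := lt_trans hpow3 hplt
    have hp4 : 4 ≤ p := by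
      have : (3 : ℕ) < p := by exact_mod_cast hp3
      omega
    have hp0 : (0 : ℝ) < (p : ℝ) := by linarith
    have hqfacts : ∀ q ∈ Q p, q / p ∈ Hf p ∧ p * (q / p) + 1 = q := by
      intro q hq
      obtain ⟨hqpr, hqx, hqmod⟩ := (hQmem p q).mpr hq
      have hdm := Nat.div_add_mod q p
      have heq : p * (q / p) + 1 = q := by omega
      have hne0 : q / p ≠ 0 := by
        intro h0
        rw [h0] at heq
        have : q = 1 := by omega
        exact absurd this hqpr.one_lt.ne'
      have hne1 : q / p ≠ 1 := by
        intro h1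
        rw [h1, mul_one] at heq
        have hodd : Odd p := hpr.odd_of_ne_two (by omega)
        have heven : Even q := by rw [← heq]; exact hodd.add_one
        have : q = 2 := (Nat.Prime.even_iff hqpr).mp heven
        omega
      have h1lt : 1 < q / p :=
        lt_of_le_of_ne (Nat.one_le_iff_ne_zero.mpr hne0) (Ne.symm hne1)
      have hcast : (p : ℝ) * ((q / p : ℕ) : ℝ) + 1 = (q : ℝ) := by exact_mod_cast heq
      have hhB : ((q / p : ℕ) : ℝ) < B := by
        have hq_lt : ((q / p : ℕ) : ℝ) * (p : ℝ) < x := by nlinarith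
        have h1 : ((q / p : ℕ) : ℝ) < x / (p : ℝ) := (lt_div_iff₀ hp0).mpr hq_lt
        have h2 : x / (p : ℝ) < x / (x / 2) ^ θ :=
          div_lt_div_of_pos_left hx0 hpowpos hplt
        rw [hBeq] at h2
        linarith
      have hhp1 : ((q / p) * p + 1).Prime := by
        have : (q / p) * p + 1 = q := by rw [Nat.mul_comm]; exact heq
        rw [this]; exact hqpr
      refine ⟨?_, heq⟩
      rw [hHfdef]
      simp only [Finset.mem_filter, Finset.mem_range]
      exact ⟨Nat.lt_succ_of_le (Nat.le_floor hhB.le), h1lt, hhB, hhp1⟩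
    have hstep1 : ∑ q ∈ Q p, (q : ℝ)⁻¹ ≤ (p : ℝ)⁻¹ * ∑ h ∈ Hf p, (h : ℝ)⁻¹ := by
      have hinj : ∀ a ∈ Q p, ∀ b ∈ Q p, a / p = b / p → a = b := by
        intro a ha b hb hab
        have h1 := (hqfacts a ha).2
        have h2 := (hqfacts b hb).2
        rw [← h1, ← h2, hab]
      calc ∑ q ∈ Q p, (q : ℝ)⁻¹
          ≤ ∑ q ∈ Q p, ((p : ℝ) * ((q / p : ℕ) : ℝ))⁻¹ := by
            refine Finset.sum_le_sum fun q hq => ?_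
            obtain ⟨hmem, heq⟩ := hqfacts q hq
            have hcast : (p : ℝ) * ((q / p : ℕ) : ℝ) + 1 = (q : ℝ) := by exact_mod_cast heq
            have h1lt : 1 < q / p := by
              rw [hHfdef] at hmem
              simp only [Finset.mem_filter] at hmem
              exact hmem.2.1
            have hpos : (0 : ℝ) < (p : ℝ) * ((q / p : ℕ) : ℝ) := by
              have : (1 : ℝ) < ((q / p : ℕ) : ℝ) := by exact_mod_cast h1lt
              nlinarith
            exact inv_anti₀ hpos (by linarith)
        _ = ∑ h ∈ (Q p).image (· / p), ((p : ℝ) * (h : ℝ))⁻¹ :=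
            (Finset.sum_image (s := Q p) (g := fun q => q / p)
              (f := fun h : ℕ => ((p : ℝ) * (h : ℝ))⁻¹) hinj).symm
        _ ≤ ∑ h ∈ Hf p, ((p : ℝ) * (h : ℝ))⁻¹ := by
            refine Finset.sum_le_sum_of_subset_of_nonneg ?_ (fun _ _ _ => by positivity)
            exact Finset.image_subset_iff.mpr fun q hq => (hqfacts q hq).1
        _ = (p : ℝ)⁻¹ * ∑ h ∈ Hf p, (h : ℝ)⁻¹ := by
            rw [Finset.mul_sum]
            exact Finset.sum_congr rfl fun h _ => by rw [mul_inv]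
    have hQnonneg : 0 ≤ ∑ q ∈ Q p, (q : ℝ)⁻¹ :=
      Finset.sum_nonneg fun q _ => by positivity
    have hHf2 : ∀ h ∈ Hf p, 2 ≤ h := by
      intro h hh
      rw [hHfdef] at hh
      simp only [Finset.mem_filter] at hh
      omega
    have hU := lemA m hm (Hf p) hHf2
    have hchain := lemB m (Hf p)
    have hsub : ∀ g ∈ Finset.Icc 1 m,
        ∑ t ∈ (Fintype.piFinset fun _ : Fin g => Hf p).filter (fun t => StrictMono t),
            ∏ i, ((t i : ℝ))⁻¹
          ≤ ∑ h ∈ (Cg g).filter (fun h => ∀ j, (h j * p + 1).Prime),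
              ∏ i, ((h i : ℝ))⁻¹ := by
      intro g _
      refine Finset.sum_le_sum_of_subset_of_nonneg ?_ (fun _ _ _ => by positivity)
      intro t ht
      rw [Finset.mem_filter] at ht ⊢
      have hval : ∀ i, t i ∈ Hf p := Fintype.mem_piFinset.mp ht.1
      have hval' : ∀ i, 1 < t i ∧ ((t i : ℝ)) < B ∧ (t i * p + 1).Prime := by
        intro i
        have := hval i
        rw [hHfdef] at this
        simp only [Finset.mem_filter] at this
        exact this.2
      refine ⟨?_, fun j => (hval' j).2.2⟩
      rw [← hCmem g]
      exact ⟨ht.2, fun i => ⟨(hval' i).1, (hval' i).2.1⟩⟩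
    have hfinal : (∑ h ∈ Hf p, (h : ℝ)⁻¹) ^ m ≤
        (m : ℝ) ^ m * ∑ g ∈ Finset.Icc 1 m,
          ∑ h ∈ (Cg g).filter (fun h => ∀ j, (h j * p + 1).Prime),
            ∏ i, ((h i : ℝ))⁻¹ :=
      le_trans hU (mul_le_mul_of_nonneg_left
        (le_trans hchain (Finset.sum_le_sum hsub)) (by positivity))
    have hUB : (∑ q ∈ Q p, (q : ℝ)⁻¹) ^ m ≤
        ((p : ℝ)⁻¹) ^ m * (∑ h ∈ Hf p, (h : ℝ)⁻¹) ^ m := by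
      rw [← mul_pow]
      exact pow_le_pow_left₀ hQnonneg hstep1 m
    have hHfnonneg : (0 : ℝ) ≤ ∑ h ∈ Hf p, (h : ℝ)⁻¹ :=
      Finset.sum_nonneg fun h _ => by positivity
    calc (p : ℝ)⁻¹ * (∑ q ∈ Q p, (q : ℝ)⁻¹) ^ m
        ≤ (p : ℝ)⁻¹ * (((p : ℝ)⁻¹) ^ m * (∑ h ∈ Hf p, (h : ℝ)⁻¹) ^ m) :=
          mul_le_mul_of_nonneg_left hUB (by positivity)
      _ = ((p : ℝ) ^ (m + 1))⁻¹ * (∑ h ∈ Hf p, (h : ℝ)⁻¹) ^ m := by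
          rw [← inv_pow, pow_succ]
          ring
      _ ≤ ((p : ℝ) ^ (m + 1))⁻¹ * ((m : ℝ) ^ m * ∑ g ∈ Finset.Icc 1 m,
            ∑ h ∈ (Cg g).filter (fun h => ∀ j, (h j * p + 1).Prime),
              ∏ i, ((h i : ℝ))⁻¹) :=
          mul_le_mul_of_nonneg_left hfinal (by positivity)
      _ = (m : ℝ) ^ m * ∑ g ∈ Finset.Icc 1 m,
            ∑ h ∈ (Cg g).filter (fun h => ∀ j, (h j * p + 1).Prime),
              ((p : ℝ) ^ (m + 1))⁻¹ * ∏ i, ((h i : ℝ))⁻¹ := by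
          simp only [Finset.mul_sum]
          exact Finset.sum_congr rfl fun g _ => Finset.sum_congr rfl fun h _ => by ring
  -- global assembly
  rw [hSconv]
  have hglobal : ∑ p ∈ P, (p : ℝ)⁻¹ * (∑ q ∈ Q p, (q : ℝ)⁻¹) ^ m ≤
      (m : ℝ) ^ m * ∑ p ∈ P, ∑ g ∈ Finset.Icc 1 m,
        ∑ h ∈ (Cg g).filter (fun h => ∀ j, (h j * p + 1).Prime),
          ((p : ℝ) ^ (m + 1))⁻¹ * ∏ i, ((h i : ℝ))⁻¹ := by
    rw [Finset.mul_sum]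
    exact Finset.sum_le_sum key
  refine le_trans hglobal (le_of_eq ?_)
  congr 1
  -- swap sums
  have hswap : ∑ p ∈ P, ∑ g ∈ Finset.Icc 1 m,
      ∑ h ∈ (Cg g).filter (fun h => ∀ j, (h j * p + 1).Prime),
        ((p : ℝ) ^ (m + 1))⁻¹ * ∏ i, ((h i : ℝ))⁻¹
      = ∑ g ∈ Finset.Icc 1 m, ∑ h ∈ Cg g, ∑ p ∈ Ph g h,
        ((p : ℝ) ^ (m + 1))⁻¹ * ∏ i, ((h i : ℝ))⁻¹ := by
    rw [Finset.sum_comm]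
    refine Finset.sum_congr rfl fun g _ => ?_
    calc ∑ p ∈ P, ∑ h ∈ (Cg g).filter (fun h => ∀ j, (h j * p + 1).Prime),
          ((p : ℝ) ^ (m + 1))⁻¹ * ∏ i, ((h i : ℝ))⁻¹
        = ∑ p ∈ P, ∑ h ∈ Cg g, if (∀ j, (h j * p + 1).Prime)
            then ((p : ℝ) ^ (m + 1))⁻¹ * ∏ i, ((h i : ℝ))⁻¹ else 0 :=
          Finset.sum_congr rfl fun p _ => Finset.sum_filter _ _
      _ = ∑ h ∈ Cg g, ∑ p ∈ P, if (∀ j, (h j * p + 1).Prime)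
            then ((p : ℝ) ^ (m + 1))⁻¹ * ∏ i, ((h i : ℝ))⁻¹ else 0 := Finset.sum_comm
      _ = ∑ h ∈ Cg g, ∑ p ∈ Ph g h,
            ((p : ℝ) ^ (m + 1))⁻¹ * ∏ i, ((h i : ℝ))⁻¹ := by
          refine Finset.sum_congr rfl fun h _ => ?_
          rw [hPhdef]
          exact (Finset.sum_filter _ _).symm
  rw [hswap]
  -- convert RHS tsums to finite sums
  simp only [Nat.add_sub_cancel]
  refine Finset.sum_congr rfl fun g hg => ?_
  rw [tsum_pred_eq_sum (fun h : Fin g → ℕ => (∏ i, ((h i : ℝ)))⁻¹ *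
    ∑' p : {p : ℕ // p.Prime ∧ (x / 2) ^ θ < (p : ℝ) ∧
        (p : ℝ) ≤ x ^ ((1 : ℝ) / ((m + 1 : ℕ) : ℝ)) ∧ ∀ j, (h j * p + 1).Prime},
      ((p.1 : ℝ) ^ (m + 1))⁻¹) (hCmem g)]
  refine Finset.sum_congr rfl fun h hh => ?_
  rw [tsum_pred_eq_sum (fun p : ℕ => ((p : ℝ) ^ (m + 1))⁻¹) (hPhmem g h)]
  rw [Finset.mul_sum, Finset.prod_inv_distrib]
  exact Finset.sum_congr rfl fun p _ => by ring
end
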